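/- For any levels r and s: r ⊆ s if and only if s ∉ r. Moreover, for every level s, levof(s) = s. -/

import Mathlib

/-!
Every element of a history is transitive (by ∈-induction, since `c = pot (c ∩ h)` and `pot`
of a family of transitive sets is transitive), so levels are transitive and closed under subsets,
and a member `c` of a history `h` has the history `c ∩ h`; hence every element of a level is
contained in a level that belongs to it. A double ∈-induction then shows that two levels are
∈-comparable or equal, which gives `r ⊆ s ↔ s ∉ r`, and `levof s = s` follows from
`s ⊆ levof s` and `s ∉ levof s`.
-/

def pot (a : ZFSet) : ZFSet :=
  ZFSet.sep (fun x => ∃ c ∈ a, x ⊆ c) (ZFSet.powerset (ZFSet.sUnion a))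

def Potent (a : ZFSet) : Prop := ∀ x, (∃ c, x ⊆ c ∧ c ∈ a) → x ∈ a

def IsHistory (h : ZFSet) : Prop := ∀ x ∈ h, x = pot (x ∩ h)

def IsLevel (s : ZFSet) : Prop := ∃ h, IsHistory h ∧ s = pot h

noncomputable def levof (a : ZFSet) : ZFSet :=
  Classical.epsilon (fun s => IsLevel s ∧ a ⊆ s ∧ ∀ t, IsLevel t → a ⊆ t → t ∉ s)

open ZFSet

lemma mem_pot {x a : ZFSet} : x ∈ pot a ↔ ∃ c ∈ a, x ⊆ c := by
  refine ⟨fun hx => (mem_sep.mp hx).2, fun ⟨c, hc, hxc⟩ => mem_sep.mpr ⟨?_, c, hc, hxc⟩⟩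
  exact mem_powerset.mpr fun y hy => mem_sUnion.mpr ⟨c, hc, hxc hy⟩

lemma mem_pot_of_subset_of_mem {x r a : ZFSet} (hxr : x ⊆ r) (hr : r ∈ pot a) : x ∈ pot a := by
  obtain ⟨c, hc, hrc⟩ := mem_pot.mp hr
  exact mem_pot.mpr ⟨c, hc, hxr.trans hrc⟩

lemma isTransitive_pot {a : ZFSet} (ha : ∀ d ∈ a, d.IsTransitive) : (pot a).IsTransitive := by
  intro x hx y hy
  obtain ⟨d, hd, hxd⟩ := mem_pot.mp hx
  exact mem_pot.mpr ⟨d, hd, (ha d hd).subset_of_mem (hxd hy)⟩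

namespace IsHistory

variable {h : ZFSet}

lemma isTransitive_of_mem (hh : IsHistory h) (c : ZFSet) : c ∈ h → c.IsTransitive := by
  induction c using ZFSet.inductionOn with
  | _ c ih =>
    intro hc
    rw [hh c hc]
    exact isTransitive_pot fun d hd => ih d (mem_inter.mp hd).1 (mem_inter.mp hd).2

lemma inter_of_mem (hh : IsHistory h) {c : ZFSet} (hc : c ∈ h) : IsHistory (c ∩ h) := by
  intro x hx
  obtain ⟨hxc, hxh⟩ := mem_inter.mp hx
  have hxc : x ⊆ c := (hh.isTransitive_of_mem c hc).subset_of_mem hxc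
  have : x ∩ (c ∩ h) = x ∩ h := ZFSet.ext fun z => by
    simp only [mem_inter]
    exact ⟨fun ⟨hzx, _, hzh⟩ => ⟨hzx, hzh⟩, fun ⟨hzx, hzh⟩ => ⟨hzx, hxc hzx, hzh⟩⟩
  rw [this]
  exact hh x hxh

lemma isLevel_of_mem (hh : IsHistory h) {c : ZFSet} (hc : c ∈ h) : IsLevel c :=
  ⟨c ∩ h, hh.inter_of_mem hc, hh c hc⟩

end IsHistory

namespace IsLevel

variable {r s : ZFSet}

lemma isTransitive (hs : IsLevel s) : s.IsTransitive := by
  obtain ⟨h, hh, rfl⟩ := hs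
  exact isTransitive_pot hh.isTransitive_of_mem

lemma mem_of_subset_of_mem (hs : IsLevel s) {x t : ZFSet} (hxt : x ⊆ t) (ht : t ∈ s) : x ∈ s := by
  obtain ⟨h, _, rfl⟩ := hs
  exact mem_pot_of_subset_of_mem hxt ht

lemma exists_isLevel_mem_of_mem (hs : IsLevel s) {x : ZFSet} (hx : x ∈ s) :
    ∃ t ∈ s, IsLevel t ∧ x ⊆ t := by
  obtain ⟨h, hh, rfl⟩ := hs
  obtain ⟨c, hc, hxc⟩ := mem_pot.mp hx
  exact ⟨c, mem_pot.mpr ⟨c, hc, subset_rfl⟩, hh.isLevel_of_mem hc, hxc⟩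

lemma subset_of_not_mem (hr : IsLevel r) (hs : IsLevel s) (hsr : s ∉ r)
    (htri : ∀ t ∈ r, IsLevel t → t ∈ s ∨ t = s ∨ s ∈ t) : r ⊆ s := by
  intro x hx
  obtain ⟨t, htr, ht, hxt⟩ := hr.exists_isLevel_mem_of_mem hx
  rcases htri t htr ht with hts | rfl | hst
  · exact hs.mem_of_subset_of_mem hxt hts
  · exact absurd htr hsr
  · exact absurd (hr.isTransitive.mem_trans hst htr) hsr

lemma trichotomy (r : ZFSet) (hr : IsLevel r) (s : ZFSet) (hs : IsLevel s) :
    r ∈ s ∨ r = s ∨ s ∈ r := by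
  induction r using ZFSet.inductionOn generalizing s with
  | _ r ihr =>
    induction s using ZFSet.inductionOn with
    | _ s ihs =>
      by_cases hrs : r ∈ s
      · exact Or.inl hrs
      by_cases hsr : s ∈ r
      · exact Or.inr (Or.inr hsr)
      refine Or.inr (Or.inl (subset_antisymm ?_ ?_))
      · exact hr.subset_of_not_mem hs hsr fun t htr ht => ihr t htr ht s hs
      · refine hs.subset_of_not_mem hr hrs fun t hts ht => ?_
        rcases ihs t hts ht with h | h | h
        · exact Or.inr (Or.inr h)
        · exact Or.inr (Or.inl h.symm)
        · exact Or.inl h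

lemma subset_iff_not_mem (hr : IsLevel r) (hs : IsLevel s) : r ⊆ s ↔ s ∉ r := by
  refine ⟨fun hrs hsr => mem_irrefl s (hrs hsr), fun hsr => ?_⟩
  rcases trichotomy r hr s hs with hrs | rfl | hsr'
  · exact hs.isTransitive.subset_of_mem hrs
  · exact subset_rfl
  · exact absurd hsr' hsr

lemma levof_eq_self (hs : IsLevel s) : levof s = s := by
  have hex : ∃ t, IsLevel t ∧ s ⊆ t ∧ ∀ u, IsLevel u → s ⊆ u → u ∉ t :=
    ⟨s, hs, subset_rfl, fun u _ hsu hus => mem_irrefl u (hsu hus)⟩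
  obtain ⟨ht, hst, hmin⟩ := Classical.epsilon_spec hex
  exact subset_antisymm ((subset_iff_not_mem ht hs).mpr (hmin s hs subset_rfl)) hst

end IsLevel

theorem stmt10 :
    (∀ r s : ZFSet, IsLevel r → IsLevel s → (r ⊆ s ↔ s ∉ r)) ∧
    (∀ s : ZFSet, IsLevel s → levof s = s) :=
  ⟨fun _ _ hr hs => IsLevel.subset_iff_not_mem hr hs, fun _ hs => hs.levof_eq_self⟩
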